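/- Rank-one projections are exactly the maximal elements of the set of rank-one effects with respect to the Loewner order. -/

import Mathlib

open Matrix ComplexOrder

/-- `A` is an effect: `0 ≤ A ≤ I`. -/
def IsEffect {n : ℕ} (A : Matrix (Fin n) (Fin n) ℂ) : Prop :=
  A.PosSemidef ∧ (1 - A).PosSemidef

section Aux

variable {n : ℕ}

lemma vmv_mulVec (v x : Fin n → ℂ) :
    vecMulVec v (star v) *ᵥ x = (star v ⬝ᵥ x) • v := by
  ext i
  simp only [mulVec, dotProduct, vecMulVec_apply, Pi.star_apply, Pi.smul_apply, smul_eq_mul,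
    Finset.sum_mul]
  exact Finset.sum_congr rfl fun j _ => by ring

lemma star_dot (v x : Fin n → ℂ) : star (star v ⬝ᵥ x) = star x ⬝ᵥ v := by
  simp [dotProduct, star_sum, mul_comm]

lemma vmv_quad (v x : Fin n → ℂ) :
    star x ⬝ᵥ (vecMulVec v (star v) *ᵥ x) = (star v ⬝ᵥ x) * star (star v ⬝ᵥ x) := by
  rw [vmv_mulVec, dotProduct_smul, smul_eq_mul, star_dot]

lemma vmv_herm (v : Fin n → ℂ) : (vecMulVec v (star v)).IsHermitian := by
  ext i j
  simp [conjTranspose_apply, vecMulVec_apply, mul_comm]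

lemma vmv_posSemidef (v : Fin n → ℂ) : (vecMulVec v (star v)).PosSemidef :=
  PosSemidef.of_dotProduct_mulVec_nonneg (vmv_herm v) fun x => by rw [vmv_quad]; exact mul_star_self_nonneg _

lemma vmv_rank (v : Fin n → ℂ) (hv : v ≠ 0) : (vecMulVec v (star v)).rank = 1 := by
  have hd : star v ⬝ᵥ v ≠ 0 := by
    rw [Ne, dotProduct_star_self_eq_zero]; exact hv
  have hrange : LinearMap.range (vecMulVec v (star v)).mulVecLin = Submodule.span ℂ {v} := by
    apply le_antisymm
    · rintro _ ⟨x, rfl⟩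
      rw [mulVecLin_apply, vmv_mulVec]
      exact Submodule.smul_mem _ _ (Submodule.mem_span_singleton_self v)
    · rw [Submodule.span_singleton_le_iff_mem]
      refine ⟨(star v ⬝ᵥ v)⁻¹ • v, ?_⟩
      rw [mulVecLin_apply, vmv_mulVec, dotProduct_smul, smul_eq_mul, inv_mul_cancel₀ hd, one_smul]
  rw [Matrix.rank, hrange, finrank_span_singleton hv]

lemma vmv_smul (a : ℂ) (v : Fin n → ℂ) :
    vecMulVec (a • v) (star (a • v)) = (a * star a) • vecMulVec v (star v) := by
  ext i j
  simp [vecMulVec_apply, Matrix.smul_apply, smul_eq_mul]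
  ring

lemma vmv_mul_self (v : Fin n → ℂ) :
    vecMulVec v (star v) * vecMulVec v (star v) = (star v ⬝ᵥ v) • vecMulVec v (star v) := by
  ext i j
  simp only [mul_apply, vecMulVec_apply, Pi.star_apply, Matrix.smul_apply, dotProduct,
    smul_eq_mul, Finset.sum_mul]
  exact Finset.sum_congr rfl fun k _ => by ring

lemma exists_vec_of_posSemidef_rank_one {A : Matrix (Fin n) (Fin n) ℂ}
    (hA : A.PosSemidef) (hr : A.rank = 1) :
    ∃ v : Fin n → ℂ, v ≠ 0 ∧ A = vecMulVec v (star v) := by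
  have hr' := hr
  rw [Matrix.rank] at hr'
  obtain ⟨⟨u, hu_mem⟩, hu0, hspan⟩ := finrank_eq_one_iff'.mp hr'
  have hu : u ≠ 0 := fun h => hu0 (Subtype.ext h)
  have hAx : ∀ x, ∃ c : ℂ, A *ᵥ x = c • u := by
    intro x
    obtain ⟨c, hc⟩ := hspan ⟨A *ᵥ x, ⟨x, mulVecLin_apply _ _⟩⟩
    exact ⟨c, by simpa using (congrArg Subtype.val hc).symm⟩
  choose c hc using fun j => hAx (Pi.single j 1)
  have hcol : ∀ i j, A i j = c j * u i := by
    intro i j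
    have h1 := congrFun (hc j) i
    simpa [Matrix.mulVec_single_one] using h1
  have hherm : ∀ i j, (A i j : ℂ) = star (A j i) := by
    intro i j
    conv_lhs => rw [← hA.1]
    rw [conjTranspose_apply]
  obtain ⟨j₀, hj₀⟩ := Function.ne_iff.mp hu
  set k : ℂ := star (c j₀) * star (u j₀) / (u j₀ * star (u j₀)) with hk
  have hcj : ∀ j, c j = k * star (u j) := by
    intro j
    have h1 : c j * u j₀ = star (u j) * star (c j₀) := by
      have h2 := hherm j₀ j
      rw [hcol j₀ j, hcol j j₀, StarMul.star_mul] at h2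
      exact h2
    have hu0' : u j₀ ≠ 0 := by simpa using hj₀
    have hne : u j₀ * star (u j₀) ≠ 0 := mul_ne_zero hu0' (star_ne_zero.mpr hu0')
    rw [hk, div_mul_eq_mul_div, eq_div_iff hne]
    linear_combination (star (u j₀)) * h1
  have hAeq : A = k • vecMulVec u (star u) := by
    ext i j
    rw [Matrix.smul_apply, vecMulVec_apply, hcol i j, hcj j]
    simp [smul_eq_mul]; ring
  have hd : 0 < star u ⬝ᵥ u := dotProduct_star_self_pos_iff.mpr hu
  have hq := hA.dotProduct_mulVec_nonneg u
  rw [hAeq, smul_mulVec, dotProduct_smul, smul_eq_mul, vmv_quad] at hq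
  have hdd : (star u ⬝ᵥ u) * star (star u ⬝ᵥ u) = (Complex.normSq (star u ⬝ᵥ u) : ℂ) := by
    rw [Complex.star_def, Complex.mul_conj]
  have hnd : 0 < Complex.normSq (star u ⬝ᵥ u) := Complex.normSq_pos.mpr (ne_of_gt hd)
  rw [hdd] at hq
  obtain ⟨hq1, hq2⟩ := Complex.nonneg_iff.mp hq
  simp only [Complex.mul_re, Complex.mul_im, Complex.ofReal_re, Complex.ofReal_im,
    mul_zero, zero_mul, sub_zero, add_zero, zero_add] at hq1 hq2
  have him : k.im = 0 := by
    rcases mul_eq_zero.mp hq2.symm with h | h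
    · exact h
    · exact absurd h (ne_of_gt hnd)
  have hre : 0 ≤ k.re :=
    nonneg_of_mul_nonneg_right (by linarith [hq1] : 0 ≤ Complex.normSq (star u ⬝ᵥ u) * k.re) hnd
  have hk0 : k ≠ 0 := by
    rintro h
    rw [h, zero_smul] at hAeq
    rw [hAeq, rank_zero] at hr
    exact absurd hr (by simp)
  have hkre : 0 < k.re := hre.lt_of_ne (fun h => hk0 (by apply Complex.ext <;> simp [← h, him]))
  refine ⟨(Real.sqrt k.re : ℂ) • u, smul_ne_zero (Complex.ofReal_ne_zero.mpr
    (ne_of_gt (Real.sqrt_pos.mpr hkre))) hu, ?_⟩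
  rw [vmv_smul, hAeq]
  congr 1
  rw [Complex.star_def, Complex.conj_ofReal, ← Complex.ofReal_mul, Real.mul_self_sqrt hkre.le]
  exact Complex.ext (by simp) (by simp [him])

lemma dot_sub_expand (v x : Fin n → ℂ) (hv : star v ⬝ᵥ v = 1) :
    star (x - (star v ⬝ᵥ x) • v) ⬝ᵥ (x - (star v ⬝ᵥ x) • v)
      = star x ⬝ᵥ x - (star v ⬝ᵥ x) * star (star v ⬝ᵥ x) := by
  have h1 : star x ⬝ᵥ v = star (star v ⬝ᵥ x) := (star_dot v x).symm
  simp only [star_sub, star_smul, sub_dotProduct, dotProduct_sub, smul_dotProduct,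
    dotProduct_smul, smul_eq_mul, hv, mul_one, h1]
  ring

lemma cauchy_le (v x : Fin n → ℂ) (hv : star v ⬝ᵥ v = 1) :
    (star v ⬝ᵥ x) * star (star v ⬝ᵥ x) ≤ star x ⬝ᵥ x :=
  sub_nonneg.mp (by rw [← dot_sub_expand v x hv]; exact dotProduct_star_self_nonneg _)

lemma vmv_one_sub_posSemidef (v : Fin n → ℂ) (hv : star v ⬝ᵥ v = 1) :
    ((1 : Matrix (Fin n) (Fin n) ℂ) - vecMulVec v (star v)).PosSemidef := by
  refine PosSemidef.of_dotProduct_mulVec_nonneg (isHermitian_one.sub (vmv_herm v)) fun x => ?_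
  rw [sub_mulVec, dotProduct_sub, one_mulVec, vmv_quad]
  exact sub_nonneg.mpr (cauchy_le v x hv)

lemma nonneg_real_repr {z : ℂ} (h : 0 ≤ z) : ∃ s : ℝ, 0 ≤ s ∧ z = (s : ℂ) := by
  obtain ⟨h1, h2⟩ := Complex.nonneg_iff.mp h
  exact ⟨z.re, h1, (Complex.ext (by simp) (by simp [← h2])).symm⟩

lemma pos_real_repr {z : ℂ} (h : 0 < z) : ∃ s : ℝ, 0 < s ∧ z = (s : ℂ) := by
  obtain ⟨h1, h2⟩ := Complex.lt_def.mp h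
  simp only [Complex.zero_re, Complex.zero_im] at h1 h2
  exact ⟨z.re, h1, (Complex.ext (by simp) (by simp [← h2])).symm⟩

end Aux

theorem rank_one_projections_maximal {n : ℕ} {A : Matrix (Fin n) (Fin n) ℂ} :
    (A.IsHermitian ∧ A * A = A ∧ A.rank = 1) ↔
      (IsEffect A ∧ A.rank = 1 ∧
        ∀ B : Matrix (Fin n) (Fin n) ℂ, IsEffect B → B.rank = 1 →
          (B - A).PosSemidef → A = B) := by
  constructor
  · rintro ⟨hH, hP2, hr1⟩
    have hApsd : A.PosSemidef := by
      refine PosSemidef.of_dotProduct_mulVec_nonneg hH fun x => ?_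
      have key : star x ⬝ᵥ (A *ᵥ x) = star (A *ᵥ x) ⬝ᵥ (A *ᵥ x) := by
        calc star x ⬝ᵥ (A *ᵥ x) = star x ⬝ᵥ ((A * A) *ᵥ x) := by rw [hP2]
        _ = star x ⬝ᵥ (A *ᵥ (A *ᵥ x)) := by rw [mulVec_mulVec]
        _ = (star x ᵥ* A) ⬝ᵥ (A *ᵥ x) := by rw [dotProduct_mulVec]
        _ = star (A *ᵥ x) ⬝ᵥ (A *ᵥ x) := by rw [star_mulVec, hH.eq]
      rw [key]
      exact dotProduct_star_self_nonneg _
    obtain ⟨v, hv0, hAeq⟩ := exists_vec_of_posSemidef_rank_one hApsd hr1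
    have hd1 : star v ⬝ᵥ v = 1 := by
      have h := hP2
      rw [hAeq, vmv_mul_self] at h
      obtain ⟨i, hi⟩ := Function.ne_iff.mp hv0
      have hi' : v i ≠ 0 := by simpa using hi
      have he := congrFun (congrFun h i) i
      rw [Matrix.smul_apply, vecMulVec_apply, smul_eq_mul] at he
      have hne : v i * star (v i) ≠ 0 := mul_ne_zero hi' (star_ne_zero.mpr hi')
      exact mul_right_cancel₀ hne (he.trans (one_mul _).symm)
    refine ⟨⟨hApsd, by rw [hAeq]; exact vmv_one_sub_posSemidef v hd1⟩, hr1, ?_⟩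
    rintro B ⟨hBpsd, hIB⟩ hBr hBA
    obtain ⟨w, hw0, hBeq⟩ := exists_vec_of_posSemidef_rank_one hBpsd hBr
    have hdw : 0 < star w ⬝ᵥ w := dotProduct_star_self_pos_iff.mpr hw0
    have hdw0 : star w ⬝ᵥ w ≠ 0 := ne_of_gt hdw
    set cc : ℂ := (star w ⬝ᵥ v) / (star w ⬝ᵥ w) with hcc
    set y : Fin n → ℂ := v - cc • w with hy
    have hwy : star w ⬝ᵥ y = 0 := by
      rw [hy, dotProduct_sub, dotProduct_smul, smul_eq_mul, hcc, div_mul_cancel₀ _ hdw0, sub_self]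
    have hzero : star v ⬝ᵥ y = 0 := by
      have h1 := hBA.dotProduct_mulVec_nonneg y
      rw [sub_mulVec, dotProduct_sub, hBeq, hAeq, vmv_quad, vmv_quad, hwy, zero_mul,
        zero_sub] at h1
      have h2 : (0:ℂ) ≤ (star v ⬝ᵥ y) * star (star v ⬝ᵥ y) := mul_star_self_nonneg _
      have h3 : (star v ⬝ᵥ y) * star (star v ⬝ᵥ y) = 0 :=
        le_antisymm (by simpa using neg_nonneg.mp (by simpa using h1)) h2
      rcases mul_eq_zero.mp h3 with h | h
      · exact h
      · exact star_eq_zero.mp h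
    have hy0 : y = 0 := by
      apply dotProduct_star_self_eq_zero.mp
      have e1 : star y ⬝ᵥ y = star y ⬝ᵥ v - cc * (star y ⬝ᵥ w) := by
        nth_rw 2 [hy]
        rw [dotProduct_sub, dotProduct_smul, smul_eq_mul]
      rw [e1, ← star_dot, hzero, star_zero, ← star_dot, hwy, star_zero, mul_zero, sub_zero]
    have hvcw : v = cc • w := by rwa [hy, sub_eq_zero] at hy0
    have hAB : A = (cc * star cc) • vecMulVec w (star w) := by rw [hAeq, hvcw, vmv_smul]
    have ht : (0:ℂ) ≤ cc * star cc := mul_star_self_nonneg _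
    obtain ⟨s, hs_nonneg, hs_eq⟩ := nonneg_real_repr ht
    obtain ⟨r, hr_pos, hr_eq⟩ := pos_real_repr hdw
    have hstar_r : star ((r:ℝ):ℂ) = ((r:ℝ):ℂ) := by
      rw [Complex.star_def, Complex.conj_ofReal]
    have htdw : s * r = 1 := by
      have h := hd1
      rw [hvcw, star_smul, smul_dotProduct, dotProduct_smul, smul_eq_mul, smul_eq_mul, hr_eq] at h
      have h' : (cc * star cc) * (r:ℂ) = 1 := by rw [← h]; ring
      rw [hs_eq, ← Complex.ofReal_mul] at h'
      exact_mod_cast h'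
    have hr_le : r ≤ 1 := by
      have h1 := hIB.dotProduct_mulVec_nonneg w
      rw [sub_mulVec, dotProduct_sub, one_mulVec, hBeq, vmv_quad, hr_eq, hstar_r,
        ← Complex.ofReal_mul, ← Complex.ofReal_sub] at h1
      have : (0:ℝ) ≤ r - r * r := by exact_mod_cast h1
      nlinarith
    have hs_le : s ≤ 1 := by
      have h2 := hBA.dotProduct_mulVec_nonneg w
      rw [sub_mulVec, dotProduct_sub, hBeq, hAB, smul_mulVec, dotProduct_smul,
        smul_eq_mul, vmv_quad, hr_eq, hstar_r, hs_eq, ← Complex.ofReal_mul,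
        ← Complex.ofReal_mul, ← Complex.ofReal_sub] at h2
      have h2' : (0:ℝ) ≤ r * r - s * (r * r) := by exact_mod_cast h2
      nlinarith
    have hs1 : s = 1 := by nlinarith
    rw [hAB, hs_eq, hs1, Complex.ofReal_one, one_smul, hBeq]
  · rintro ⟨⟨hApsd, hIA⟩, hr1, hmax⟩
    obtain ⟨v, hv0, hAeq⟩ := exists_vec_of_posSemidef_rank_one hApsd hr1
    have hd : 0 < star v ⬝ᵥ v := dotProduct_star_self_pos_iff.mpr hv0
    obtain ⟨r, hr_pos, hr_eq⟩ := pos_real_repr hd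
    have hsr : Real.sqrt r ≠ 0 := ne_of_gt (Real.sqrt_pos.mpr hr_pos)
    set w : Fin n → ℂ := (((Real.sqrt r)⁻¹ : ℝ) : ℂ) • v with hw
    have hw1 : star w ⬝ᵥ w = 1 := by
      rw [hw, star_smul, smul_dotProduct, dotProduct_smul, smul_eq_mul, smul_eq_mul, hr_eq,
        Complex.star_def, Complex.conj_ofReal, ← Complex.ofReal_mul, ← Complex.ofReal_mul]
      rw [show ((Real.sqrt r)⁻¹ * ((Real.sqrt r)⁻¹ * r) : ℝ) = 1 by
        field_simp; rw [Real.sq_sqrt hr_pos.le]]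
      exact Complex.ofReal_one
    have hw0 : w ≠ 0 := smul_ne_zero (Complex.ofReal_ne_zero.mpr (inv_ne_zero hsr)) hv0
    have hBeff : IsEffect (vecMulVec w (star w)) :=
      ⟨vmv_posSemidef w, vmv_one_sub_posSemidef w hw1⟩
    have hBr : (vecMulVec w (star w)).rank = 1 := vmv_rank w hw0
    have hvw : v = ((Real.sqrt r : ℝ) : ℂ) • w := by
      rw [hw, smul_smul, ← Complex.ofReal_mul, mul_inv_cancel₀ hsr, Complex.ofReal_one, one_smul]
    have hAB : A = ((r:ℝ):ℂ) • vecMulVec w (star w) := by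
      rw [hAeq, hvw, vmv_smul]
      congr 1
      rw [Complex.star_def, Complex.conj_ofReal, ← Complex.ofReal_mul,
        Real.mul_self_sqrt hr_pos.le]
    have hstar_r : star ((r:ℝ):ℂ) = ((r:ℝ):ℂ) := by
      rw [Complex.star_def, Complex.conj_ofReal]
    have hr_le : r ≤ 1 := by
      have h1 := hIA.dotProduct_mulVec_nonneg v
      rw [sub_mulVec, dotProduct_sub, one_mulVec, hAeq, vmv_quad, hr_eq, hstar_r,
        ← Complex.ofReal_mul, ← Complex.ofReal_sub] at h1
      have : (0:ℝ) ≤ r - r * r := by exact_mod_cast h1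
      nlinarith
    have hBA : (vecMulVec w (star w) - A).PosSemidef := by
      refine PosSemidef.of_dotProduct_mulVec_nonneg ((vmv_herm w).sub hApsd.1) fun x => ?_
      rw [sub_mulVec, dotProduct_sub, hAB, smul_mulVec, dotProduct_smul, smul_eq_mul,
        vmv_quad]
      have hq : (0:ℂ) ≤ (star w ⬝ᵥ x) * star (star w ⬝ᵥ x) := mul_star_self_nonneg _
      have e : (star w ⬝ᵥ x) * star (star w ⬝ᵥ x)
            - ((r:ℝ):ℂ) * ((star w ⬝ᵥ x) * star (star w ⬝ᵥ x))
          = ((1:ℂ) - ((r:ℝ):ℂ)) * ((star w ⬝ᵥ x) * star (star w ⬝ᵥ x)) := by ring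
      rw [e]
      refine mul_nonneg ?_ hq
      rw [show (1:ℂ) - ((r:ℝ):ℂ) = (((1 - r : ℝ)):ℂ) by push_cast; ring]
      exact_mod_cast sub_nonneg.mpr hr_le
    have hfin := hmax _ hBeff hBr hBA
    refine ⟨hApsd.1, ?_, hr1⟩
    rw [hfin, vmv_mul_self, hw1, one_smul]
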